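/- Let φ ∈ C([0,∞);ℝ) with A_∞(φ) := ∫₀^∞ e^{2φ(u)} du < ∞, and define T*_z(φ)(s) = φ(s) − log(1 + (A_s(φ)/A_∞(φ))(e^z − 1)). Then T*_{−z}(T*_z(φ)) = φ for every real z. -/

import Mathlib

open MeasureTheory Real

noncomputable def pathA (φ : ℝ → ℝ) (s : ℝ) : ℝ := ∫ u in (0:ℝ)..s, Real.exp (2 * φ u)

noncomputable def pathAinf (φ : ℝ → ℝ) : ℝ := ∫ u in Set.Ioi (0:ℝ), Real.exp (2 * φ u)

noncomputable def pathTstar (z : ℝ) (φ : ℝ → ℝ) (s : ℝ) : ℝ :=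
  φ s - Real.log (1 + (pathA φ s / pathAinf φ) * (Real.exp z - 1))


/-!
Write `A = pathA φ`, `I = pathAinf φ`, `c = exp z - 1` and `D = 1 + (A / I) c`, so that
`T*_z φ = φ - log D` and `exp (2 T*_z φ) = exp (2 φ) / D²`. Since `A / D` has derivative
`A' / D²`, the primitive of `exp (2 T*_z φ)` is `A / D`, whose limit is `I / exp z`. Hence the
ratio `A / I` becomes `r ↦ r exp z / (1 + r c)` under `T*_z`, a Möbius map inverted by the one for
`-z`, and the new denominator is exactly `D⁻¹`.
-/

open MeasureTheory Real Filter Topology Set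

noncomputable def tstarDenom (z : ℝ) (φ : ℝ → ℝ) (s : ℝ) : ℝ :=
  1 + (pathA φ s / pathAinf φ) * (Real.exp z - 1)

lemma pathTstar_eq_sub_log (z : ℝ) (φ : ℝ → ℝ) (s : ℝ) :
    pathTstar z φ s = φ s - log (tstarDenom z φ s) := rfl

lemma min_one_le_one_add_mul_sub_one {r : ℝ} (hr : r ∈ Icc (0 : ℝ) 1) (a : ℝ) :
    min 1 a ≤ 1 + r * (a - 1) := by
  nlinarith [mul_nonneg (sub_nonneg.2 hr.2) (sub_nonneg.2 (min_le_left 1 a)),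
    mul_nonneg hr.1 (sub_nonneg.2 (min_le_right 1 a))]

section

variable {φ : ℝ → ℝ}

lemma pathAinf_pos (hInt : IntegrableOn (fun u => exp (2 * φ u)) (Ioi 0)) : 0 < pathAinf φ := by
  rw [pathAinf, setIntegral_pos_iff_support_of_nonneg_ae
    (.of_forall fun u => (exp_pos _).le) hInt]
  simp [Function.support, (exp_pos _).ne']

lemma pathA_nonneg {t : ℝ} (ht : 0 ≤ t) : 0 ≤ pathA φ t :=
  intervalIntegral.integral_nonneg ht fun _ _ => (exp_pos _).le

lemma pathA_le_pathAinf (hInt : IntegrableOn (fun u => exp (2 * φ u)) (Ioi 0)) {t : ℝ}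
    (ht : 0 ≤ t) : pathA φ t ≤ pathAinf φ := by
  rw [pathA, intervalIntegral.integral_of_le ht, pathAinf]
  exact setIntegral_mono_set hInt (.of_forall fun _ => (exp_pos _).le)
    Ioc_subset_Ioi_self.eventuallyLE

lemma pathA_div_pathAinf_mem_Icc (hInt : IntegrableOn (fun u => exp (2 * φ u)) (Ioi 0))
    {t : ℝ} (ht : 0 ≤ t) : pathA φ t / pathAinf φ ∈ Icc (0 : ℝ) 1 :=
  ⟨div_nonneg (pathA_nonneg ht) (pathAinf_pos hInt).le,
    div_le_one_of_le₀ (pathA_le_pathAinf hInt ht) (pathAinf_pos hInt).le⟩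

lemma min_one_exp_le_tstarDenom (hInt : IntegrableOn (fun u => exp (2 * φ u)) (Ioi 0))
    (z : ℝ) {t : ℝ} (ht : 0 ≤ t) : min 1 (exp z) ≤ tstarDenom z φ t :=
  min_one_le_one_add_mul_sub_one (pathA_div_pathAinf_mem_Icc hInt ht) _

lemma tstarDenom_pos (hInt : IntegrableOn (fun u => exp (2 * φ u)) (Ioi 0))
    (z : ℝ) {t : ℝ} (ht : 0 ≤ t) : 0 < tstarDenom z φ t :=
  (lt_min one_pos (exp_pos z)).trans_le (min_one_exp_le_tstarDenom hInt z ht)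

lemma tendsto_pathA_atTop (hInt : IntegrableOn (fun u => exp (2 * φ u)) (Ioi 0)) :
    Tendsto (pathA φ) atTop (𝓝 (pathAinf φ)) :=
  intervalIntegral_tendsto_integral_Ioi 0 hInt tendsto_id

lemma exp_two_mul_pathTstar {z t : ℝ} (hD : 0 < tstarDenom z φ t) :
    exp (2 * pathTstar z φ t) = exp (2 * φ t) / tstarDenom z φ t ^ 2 := by
  rw [pathTstar_eq_sub_log, mul_sub, exp_sub, two_mul (log _), exp_add, exp_log hD, sq]

lemma hasDerivAt_pathA (hφ : Continuous φ) (x : ℝ) :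
    HasDerivAt (pathA φ) (exp (2 * φ x)) x := by
  have hcont : Continuous fun u => exp (2 * φ u) := by fun_prop
  exact intervalIntegral.integral_hasDerivAt_right (hcont.intervalIntegrable _ _)
    hcont.stronglyMeasurable.stronglyMeasurableAtFilter hcont.continuousAt

lemma continuous_tstarDenom (hφ : Continuous φ) (z : ℝ) : Continuous (tstarDenom z φ) := by
  have hA : Continuous (pathA φ) :=
    continuous_iff_continuousAt.2 fun x => (hasDerivAt_pathA hφ x).continuousAt
  unfold tstarDenom
  fun_prop

lemma hasDerivAt_pathA_div_tstarDenom (hφ : Continuous φ) {z x : ℝ}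
    (hD : tstarDenom z φ x ≠ 0) :
    HasDerivAt (fun t => pathA φ t / tstarDenom z φ t)
      (exp (2 * φ x) / tstarDenom z φ x ^ 2) x := by
  have hA := hasDerivAt_pathA hφ x
  have hD' : HasDerivAt (tstarDenom z φ) (exp (2 * φ x) / pathAinf φ * (exp z - 1)) x :=
    ((hA.div_const _).mul_const _).const_add 1
  refine (hA.div hD' hD).congr_deriv ?_
  simp only [tstarDenom]
  ring

lemma integrableOn_exp_two_mul_pathTstar (hφ : Continuous φ)
    (hInt : IntegrableOn (fun u => exp (2 * φ u)) (Ioi 0)) (z : ℝ) :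
    IntegrableOn (fun u => exp (2 * pathTstar z φ u)) (Ioi 0) := by
  have hmeas : Measurable fun u => exp (2 * pathTstar z φ u) := by
    have := (continuous_tstarDenom hφ z).measurable
    simp only [pathTstar_eq_sub_log]
    fun_prop
  refine (hInt.div_const (min 1 (exp z) ^ 2)).mono' hmeas.aestronglyMeasurable ?_
  filter_upwards [ae_restrict_mem measurableSet_Ioi] with u hu
  have hD := tstarDenom_pos hInt z (hu.le)
  rw [norm_of_nonneg (exp_pos _).le, exp_two_mul_pathTstar hD]
  gcongr
  exact min_one_exp_le_tstarDenom hInt z (hu.le)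

lemma pathA_pathTstar (hφ : Continuous φ)
    (hInt : IntegrableOn (fun u => exp (2 * φ u)) (Ioi 0)) (z : ℝ) {t : ℝ} (ht : 0 ≤ t) :
    pathA (pathTstar z φ) t = pathA φ t / tstarDenom z φ t := by
  rw [pathA, intervalIntegral.integral_eq_sub_of_hasDerivAt
    (f := fun t => pathA φ t / tstarDenom z φ t)]
  · simp [pathA]
  · intro x hx
    rw [uIcc_of_le ht] at hx
    have hD := tstarDenom_pos hInt z hx.1
    rw [exp_two_mul_pathTstar hD]
    exact hasDerivAt_pathA_div_tstarDenom hφ hD.ne'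
  · exact (intervalIntegrable_iff_integrableOn_Ioc_of_le ht).2
      ((integrableOn_exp_two_mul_pathTstar hφ hInt z).mono_set Ioc_subset_Ioi_self)

lemma tendsto_tstarDenom_atTop (hInt : IntegrableOn (fun u => exp (2 * φ u)) (Ioi 0)) (z : ℝ) :
    Tendsto (tstarDenom z φ) atTop (𝓝 (exp z)) := by
  have h := (((tendsto_pathA_atTop hInt).div_const (pathAinf φ)).mul_const (exp z - 1)).const_add 1
  rwa [div_self (pathAinf_pos hInt).ne', one_mul, add_sub_cancel] at h

lemma pathAinf_pathTstar (hφ : Continuous φ)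
    (hInt : IntegrableOn (fun u => exp (2 * φ u)) (Ioi 0)) (z : ℝ) :
    pathAinf (pathTstar z φ) = pathAinf φ / exp z := by
  refine tendsto_nhds_unique ?_
    ((tendsto_pathA_atTop hInt).div (tendsto_tstarDenom_atTop hInt z) (exp_pos z).ne')
  refine (tendsto_pathA_atTop (integrableOn_exp_two_mul_pathTstar hφ hInt z)).congr' ?_
  filter_upwards [eventually_ge_atTop 0] with t ht
  exact pathA_pathTstar hφ hInt z ht

lemma tstarDenom_neg_pathTstar (hφ : Continuous φ)
    (hInt : IntegrableOn (fun u => exp (2 * φ u)) (Ioi 0)) (z : ℝ) {s : ℝ} (hs : 0 ≤ s) :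
    tstarDenom (-z) (pathTstar z φ) s = (tstarDenom z φ s)⁻¹ := by
  have hD := (tstarDenom_pos hInt z hs).ne'
  have hI := (pathAinf_pos hInt).ne'
  rw [tstarDenom, pathA_pathTstar hφ hInt z hs, pathAinf_pathTstar hφ hInt z, exp_neg]
  set D := tstarDenom z φ s with hDdef
  field_simp
  rw [hDdef, tstarDenom]
  field_simp
  ring

end

theorem stmt10 (φ : ℝ → ℝ) (hφ : Continuous φ)
    (hInt : IntegrableOn (fun u => Real.exp (2 * φ u)) (Set.Ioi (0:ℝ)))
    (z : ℝ) (s : ℝ) (hs : 0 ≤ s) :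
    pathTstar (-z) (pathTstar z φ) s = φ s := by
  rw [pathTstar_eq_sub_log, tstarDenom_neg_pathTstar hφ hInt z hs, log_inv, pathTstar_eq_sub_log]
  ring
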